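/- Let u ∈ ℝ³ be nonzero, w ∈ ℝ³, and set d := u/‖u‖ and H_d := I − 2 d ⊗ d (the Householder operator). Then the bending strain map κ̃ : (ℝ³ \ {0}) × ℝ³ → ℝ³ defined by κ̃(u, w) = (u × w)/‖u‖² is Fréchet differentiable at (u, w) with derivative (h, k) ↦ −(1/‖u‖²) · (w × (H_d h)) + (1/‖u‖) · (d × k); this is the second block row of the linearized strain operator B of the rod formulation. -/

import Mathlib

/-!
The map is `p ↦ (‖p.1‖²)⁻¹ • B p.1 p.2` with `B` the (bounded bilinear) cross product, so the
product and chain rules give the derivative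
`(h, k) ↦ (‖u‖²)⁻¹ • (h × w + u × k) − (2⟪u, h⟫/‖u‖⁴) • (u × w)`.
Expanding `w × H_d h = w × h − (2⟪u, h⟫/‖u‖²) • (w × u)` and using anticommutativity shows that
this is the stated formula.
-/

/-- The cross product on `ℝ³` with the Euclidean norm. -/
noncomputable def cross3 (u v : EuclideanSpace ℝ (Fin 3)) : EuclideanSpace ℝ (Fin 3) :=
  (EuclideanSpace.equiv (Fin 3) ℝ).symm
    (crossProduct ((EuclideanSpace.equiv (Fin 3) ℝ) u) ((EuclideanSpace.equiv (Fin 3) ℝ) v))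

open scoped RealInnerProductSpace

section InvNormSqSmulBilinear

variable {E F G : Type*} [NormedAddCommGroup E] [InnerProductSpace ℝ E]
  [NormedAddCommGroup F] [NormedSpace ℝ F] [NormedAddCommGroup G] [NormedSpace ℝ G]

theorem hasFDerivAt_inv_norm_sq_smul_bilinear (B : E →L[ℝ] F →L[ℝ] G) {u : E} (hu : u ≠ 0)
    (w : F) (L : E × F →L[ℝ] G)
    (hL : ∀ h k, L (h, k) = (‖u‖ ^ 2)⁻¹ • (B h w + B u k) - (2 * ⟪u, h⟫ / ‖u‖ ^ 4) • B u w) :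
    HasFDerivAt (fun p : E × F => (‖p.1‖ ^ 2)⁻¹ • B p.1 p.2) L (u, w) := by
  have hinv := (hasDerivAt_inv (pow_ne_zero 2 (norm_ne_zero_iff.mpr hu))).comp_hasFDerivAt (u, w)
    (hasFDerivAt_fst (p := (u, w))).norm_sq
  have hB := B.hasFDerivAt_of_bilinear (hasFDerivAt_fst (p := (u, w))) hasFDerivAt_snd
  refine (hinv.smul hB).congr_fderiv (ContinuousLinearMap.ext fun ⟨h, k⟩ => ?_)
  simp only [add_apply, smul_apply, ContinuousLinearMap.smulRight_apply,
    ContinuousLinearMap.comp_apply, ContinuousLinearMap.coe_fst', innerSL_apply_apply,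
    ContinuousLinearMap.precompR_apply, ContinuousLinearMap.precompL_apply, hL,
    Function.comp_apply, ContinuousLinearMap.compL_apply, ContinuousLinearMap.coe_snd']
  module

end InvNormSqSmulBilinear

noncomputable def cross3CLM :
    EuclideanSpace ℝ (Fin 3) →L[ℝ] EuclideanSpace ℝ (Fin 3) →L[ℝ] EuclideanSpace ℝ (Fin 3) :=
  let e := (EuclideanSpace.equiv (Fin 3) ℝ).toLinearEquiv
  ((crossProduct.compl₁₂ e.toLinearMap e.toLinearMap).compr₂
    e.symm.toLinearMap).toContinuousBilinearMap

@[simp]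
theorem cross3CLM_apply (u v : EuclideanSpace ℝ (Fin 3)) : cross3CLM u v = cross3 u v := rfl

theorem cross3_anticomm (u v : EuclideanSpace ℝ (Fin 3)) : cross3 u v = -cross3 v u := by
  rw [cross3, cross3, ← map_neg, cross_anticomm]

theorem neg_cross3_householder_add (u w h k : EuclideanSpace ℝ (Fin 3)) :
    -((‖u‖ ^ 2)⁻¹ • cross3 w (h - (2 : ℝ) • (⟪‖u‖⁻¹ • u, h⟫ • (‖u‖⁻¹ • u))))
        + ‖u‖⁻¹ • cross3 (‖u‖⁻¹ • u) k =
      (‖u‖ ^ 2)⁻¹ • (cross3 h w + cross3 u k) - (2 * ⟪u, h⟫ / ‖u‖ ^ 4) • cross3 u w := by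
  simp only [← cross3CLM_apply, map_sub, map_smul, smul_apply, real_inner_smul_left]
  simp only [cross3CLM_apply]
  rw [cross3_anticomm w h, cross3_anticomm w u]
  module

/-- The bending strain map `κ̃(u, w) = (u × w)/‖u‖²` is Fréchet differentiable
at any `(u, w)` with `u ≠ 0`, with derivative
`(h, k) ↦ −(1/‖u‖²)(w × (H_d h)) + (1/‖u‖)(d × k)`, where `d = u/‖u‖` and
`H_d h = h − 2 (d·h) d` is the Householder operator. -/
theorem bending_strain_frechet_derivative
    (u w : EuclideanSpace ℝ (Fin 3)) (hu : u ≠ 0)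
    (L : EuclideanSpace ℝ (Fin 3) × EuclideanSpace ℝ (Fin 3) →L[ℝ] EuclideanSpace ℝ (Fin 3))
    (hL : ∀ hk : EuclideanSpace ℝ (Fin 3) × EuclideanSpace ℝ (Fin 3),
      L hk = -((‖u‖ ^ 2)⁻¹ •
          cross3 w (hk.1 - (2 : ℝ) • ((inner ℝ (‖u‖⁻¹ • u) hk.1 : ℝ) • (‖u‖⁻¹ • u))))
        + ‖u‖⁻¹ • cross3 (‖u‖⁻¹ • u) hk.2) :
    HasFDerivAt
      (fun p : EuclideanSpace ℝ (Fin 3) × EuclideanSpace ℝ (Fin 3) =>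
        (‖p.1‖ ^ 2)⁻¹ • cross3 p.1 p.2) L (u, w) :=
  hasFDerivAt_inv_norm_sq_smul_bilinear cross3CLM hu w L fun h k =>
    (hL (h, k)).trans (neg_cross3_householder_add u w h k)
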